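/- arXiv:0709.3034 — 4 statements merged into one kernel-verified Lean document; each statement's English description precedes it below -/
import Mathlib

section
/- Reduction of arbitrary queries to term queries: given a source S = (T, ≼, Obj, I) and a query q with disjuncts d₁,...,dₖ, let t_q ∉ T be a fresh term, T^q = T ∪ {t_q}, ≼^q the reflexive transitive closure of ≼ together with the relationships dᵢ ≼ t_q for each disjunct, and I^q extending I with I^q(t_q) = ∅. Then ans(q, S) = ans(t_q, S^q) where S^q = (T^q, ≼^q, Obj, I^q). -/
/-- `J` is a model of the simplified source with hyperedges `E` and stored
interpretation `I`. -/
def IsModel {T Obj : Type*} (E : Set (Finset T × T)) (I : T → Set Obj)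
    (J : T → Set Obj) : Prop :=
  (∀ t, I t ⊆ J t) ∧ ∀ p ∈ E, (⋂ u ∈ p.1, J u) ⊆ J p.2

/-- Reduction of arbitrary queries to term queries: given a source
`S = (T, E, Obj, I)` and a DNF query `q` with disjuncts `d₁,...,dₖ` (each a
conjunction of terms, represented as a finite set), adjoin a fresh term `t_q`
(here `none : Option T`), extend the taxonomy with the relationships
`dᵢ ≼ t_q`, and interpret `t_q` by `∅`.  Then `ans(q,S) = ans(t_q,S^q)`. -/
theorem stmt_7 {T Obj : Type*} [DecidableEq T]
    (E : Set (Finset T × T)) (I : T → Set Obj) (q : List (Finset T)) :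
    {o : Obj | ∀ J : T → Set Obj, IsModel E I J →
        o ∈ ⋃ d ∈ q, ⋂ t ∈ d, J t} =
    {o : Obj | ∀ J' : Option T → Set Obj,
        IsModel
          ({p : Finset (Option T) × Option T |
              (∃ p₀ ∈ E, p = (p₀.1.image some, some p₀.2)) ∨
              (∃ d ∈ q, p = (d.image some, none))})
          (fun x => match x with | some t => I t | none => (∅ : Set Obj)) J' →
        o ∈ J' none} := by
  ext o
  simp only [Set.mem_setOf_eq]
  constructor
  · intro h J' hJ'
    obtain ⟨hI, hE⟩ := hJ'
    have hmodel : IsModel E I (fun t => J' (some t)) := by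
      refine ⟨fun t => hI (some t), fun p hp => ?_⟩
      have := hE (p.1.image some, some p.2) (Or.inl ⟨p, hp, rfl⟩)
      refine fun x hx => this ?_
      simp only [Set.mem_iInter, Finset.mem_image] at hx ⊢
      rintro u ⟨t, ht, rfl⟩
      exact hx t ht
    have := h _ hmodel
    simp only [Set.mem_iUnion] at this
    obtain ⟨d, hd, hmem⟩ := this
    have hedge := hE (d.image some, none) (Or.inr ⟨d, hd, rfl⟩)
    refine hedge ?_
    simp only [Set.mem_iInter, Finset.mem_image] at hmem ⊢
    rintro u ⟨t, ht, rfl⟩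
    exact hmem t ht
  · intro h J hJ
    obtain ⟨hI, hE⟩ := hJ
    set J' : Option T → Set Obj := fun x => match x with
      | some t => J t
      | none => ⋃ d ∈ q, ⋂ t ∈ d, J t with hJ'def
    have hmodel : IsModel
        ({p : Finset (Option T) × Option T |
            (∃ p₀ ∈ E, p = (p₀.1.image some, some p₀.2)) ∨
            (∃ d ∈ q, p = (d.image some, none))})
        (fun x => match x with | some t => I t | none => (∅ : Set Obj)) J' := by
      constructor
      · rintro (_ | t)
        · exact Set.empty_subset _
        · exact hI t
      · rintro p (⟨p₀, hp₀, rfl⟩ | ⟨d, hd, rfl⟩)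
        · refine fun x hx => hE p₀ hp₀ ?_
          simp only [Set.mem_iInter, Finset.mem_image] at hx ⊢
          intro t ht
          exact hx (some t) ⟨t, ht, rfl⟩
        · intro x hx
          simp only [hJ'def, Set.mem_iUnion]
          refine ⟨d, hd, ?_⟩
          simp only [Set.mem_iInter] at hx ⊢
          intro t ht
          exact hx (some t) (Finset.mem_image_of_mem some ht)
    exact h J' hmodel
end

section
/- Hitting sets yield answer sets: let 𝒞 = {C₁,...,Cₖ} be a collection of subsets of a finite set C, and let S_𝒞 be the source with terminology T_𝒞 = C ∪ {t, u₁,...,uₖ} (fresh t, uᵢ), taxonomy generated (by reflexive-transitive closure) by {(x, uⱼ) | x ∈ Cⱼ, 1 ≤ j ≤ k} ∪ {(u₁ ∧ ... ∧ uₖ, t)}, empty object domain and empty interpretation. Then every hitting set H for 𝒞 is an answer set for the term query t in S_𝒞. -/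
/-- Hitting sets yield answer sets.  The terminology of the source `S_𝒞` is
`C ∪ {u₁,...,uₖ} ∪ {t}`, encoded as `Option (C ⊕ Fin k)` with the fresh term
`t = none` and `uⱼ = some (inr j)`.  A model `J` of its taxonomy satisfies
`J(x) ⊆ J(uⱼ)` for every `x ∈ Cⱼ` and `J(u₁) ∩ ... ∩ J(uₖ) ⊆ J(t)`.
If `H` is a hitting set for `𝒞` then `H` is an answer set for the term query
`t`: over any domain, any object belonging to `J(x)` for every `x ∈ H` belongs
to `J(t)`, for every model `J`. -/
theorem stmt_9 {C : Type*} (k : ℕ) (𝒞 : Fin k → Set C) (H : Set C)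
    (hhit : ∀ j : Fin k, ∃ x ∈ 𝒞 j, x ∈ H) :
    ∀ (Obj : Type) (J : Option (C ⊕ Fin k) → Set Obj),
      ((∀ j : Fin k, ∀ x ∈ 𝒞 j, J (some (Sum.inl x)) ⊆ J (some (Sum.inr j))) ∧
        (⋂ j : Fin k, J (some (Sum.inr j))) ⊆ J none) →
      ∀ o : Obj, (∀ x ∈ H, o ∈ J (some (Sum.inl x))) → o ∈ J none := by
  intro Obj J ⟨h1, h2⟩ o ho
  apply h2
  simp only [Set.mem_iInter]
  intro j
  obtain ⟨x, hx, hxH⟩ := hhit j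
  exact h1 j x hx (ho x hxH)
end

section
/- Datalog-style characterization of answers: for a simplified source S with taxonomy generated by hyperedges E and object o ∈ Obj, define the set Der(o) ⊆ T as the least set containing ind_S(o) = {u | o ∈ I(u)} and closed under the rule: if ({u₁,...,u_r}, t) ∈ E and {u₁,...,u_r} ⊆ Der(o), then t ∈ Der(o). Then for every term t, o ∈ ans(t, S) if and only if t ∈ Der(o). -/
/-- Answer of the term query `t`. -/
def ans {T Obj : Type*} (E : Set (Finset T × T)) (I : T → Set Obj) (t : T) :
    Set Obj :=
  {o | ∀ J : T → Set Obj, IsModel E I J → o ∈ J t}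

/-- Datalog-style characterization of answers: if `Der` is the least set of
terms containing the index `ind_S(o) = {u | o ∈ I(u)}` of an object `o` and
closed under the hyperedge rules of `E`, then for every term `t`,
`o ∈ ans(t,S)` iff `t ∈ Der`. -/
theorem stmt_11 {T Obj : Type*} [Finite T] (E : Set (Finset T × T))
    (I : T → Set Obj) (hE : E.Finite) (o : Obj) (Der : Set T)
    (hbase : ∀ u : T, o ∈ I u → u ∈ Der)
    (hclosed : ∀ p ∈ E, (∀ u ∈ p.1, u ∈ Der) → p.2 ∈ Der)
    (hleast : ∀ D : Set T, (∀ u : T, o ∈ I u → u ∈ D) →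
      (∀ p ∈ E, (∀ u ∈ p.1, u ∈ D) → p.2 ∈ D) → Der ⊆ D) :
    ∀ t : T, o ∈ ans E I t ↔ t ∈ Der := by
  -- canonical least derivation set for each object
  set D0 : Obj → Set T := fun x =>
    ⋂₀ {D | (∀ u : T, x ∈ I u → u ∈ D) ∧
        (∀ p ∈ E, (∀ u ∈ p.1, u ∈ D) → p.2 ∈ D)} with hD0
  -- the canonical model
  set J : T → Set Obj := fun u => {x | u ∈ D0 x} with hJ
  have hmodel : IsModel E I J := by
    constructor
    · intro t x hx
      simp only [hJ, hD0, Set.mem_setOf_eq, Set.mem_sInter]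
      intro D hD
      exact hD.1 t hx
    · intro p hp x hx
      simp only [hJ, Set.mem_iInter, Set.mem_setOf_eq] at hx
      simp only [hJ, hD0, Set.mem_setOf_eq, Set.mem_sInter]
      intro D hD
      refine hD.2 p hp fun u hu => ?_
      have := hx u hu
      simp only [hD0, Set.mem_sInter] at this
      exact this D hD
  intro t
  constructor
  · intro h
    have ht : o ∈ J t := h J hmodel
    simp only [hJ, hD0, Set.mem_setOf_eq, Set.mem_sInter] at ht
    exact ht Der ⟨hbase, hclosed⟩
  · intro ht K hK
    have : Der ⊆ {u | o ∈ K u} := by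
      refine hleast _ (fun u hu => hK.1 u hu) (fun p hp hall => ?_)
      refine hK.2 p hp ?_
      simp only [Set.mem_iInter]
      exact fun u hu => hall u hu
    exact this ht
end

section
/- Per-object decomposition of the minimal model: for a simplified source S = (T, ≼, Obj, I), the minimal model satisfies Ī(t) = {o ∈ Obj | t ∈ Der(o)} for every t ∈ T, where Der(o) is the derivation closure of the index of o under the hyperedge rules. In particular, ans(t,S) can be computed object-by-object. -/
/-- Per-object decomposition of the minimal model: if `Ibar` is the least model
of the simplified source and, for each object `o`, `Der o` is the derivation
closure of the index of `o` under the hyperedge rules, then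
`Ī(t) = {o | t ∈ Der o}` for every term `t`. -/
theorem stmt_12 {T Obj : Type*} (E : Set (Finset T × T)) (I : T → Set Obj)
    (Ibar : T → Set Obj)
    (hmodel : IsModel E I Ibar)
    (hleast : ∀ J : T → Set Obj, IsModel E I J → ∀ t, Ibar t ⊆ J t)
    (Der : Obj → Set T)
    (hbase : ∀ o : Obj, ∀ u : T, o ∈ I u → u ∈ Der o)
    (hclosed : ∀ o : Obj, ∀ p ∈ E, (∀ u ∈ p.1, u ∈ Der o) → p.2 ∈ Der o)
    (hleastDer : ∀ o : Obj, ∀ D : Set T, (∀ u : T, o ∈ I u → u ∈ D) →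
      (∀ p ∈ E, (∀ u ∈ p.1, u ∈ D) → p.2 ∈ D) → Der o ⊆ D) :
    ∀ t : T, Ibar t = {o : Obj | t ∈ Der o} := by
  intro t
  apply Set.Subset.antisymm
  · apply hleast (fun t => {o : Obj | t ∈ Der o})
    constructor
    · intro u o ho
      exact hbase o u ho
    · intro p hp o ho
      refine hclosed o p hp (fun u hu => ?_)
      exact Set.mem_iInter₂.mp ho u hu
  · intro o ho
    have := hleastDer o {u | o ∈ Ibar u}
      (fun u hu => hmodel.1 u hu)
      (fun p hp h => hmodel.2 p hp (Set.mem_iInter₂.mpr h))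
    exact this ho
end
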